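/- If moreover c₁₂(pT L₁) + c₂₂(pT L₂) = W₂, ker ρ_{A1} ∩ ker d₁₁ ∩ ker d₁₂ = 0 and ker ρ_{A2} ∩ ker d₂₂ ∩ ker d₂₃ = 0, then every pair (a₁,a₂) ∈ A₁ × A₂ with d₁₂ a₁ = d₂₂ a₂, ρ_{A1} a₁ = 0, ρ_{A2} a₂ = 0, d₁₁ a₁ = 0 and d₂₃ a₂ = 0 is zero. (Linear core of the claim that if the constituent 1-shifted coisotropic structures are strong and the intersection is transverse, then the 1-shifted coisotropic structure on the strong fibre product is strong.) -/
import Mathlib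


/-- A subspace `L ⊆ V × V*` is Lagrangian if it equals its orthogonal
complement with respect to the symmetric pairing
`⟨(v,α),(w,β)⟩ = α(w) + β(v)`. -/
def IsLagrangian {V : Type*} [AddCommGroup V] [Module ℝ V]
    (L : Submodule ℝ (V × Module.Dual ℝ V)) : Prop :=
  ∀ x : V × Module.Dual ℝ V, x ∈ L ↔ ∀ y ∈ L, x.2 y.1 + y.2 x.1 = 0

/-- If the constituent 1-shifted coisotropic structures are strong and the
intersection is transverse, then the 1-shifted coisotropic structure on the
strong fibre product is strong (linear core). -/
theorem strong_fibre_product_strong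
    {A₁ A₂ V₁ V₂ B₁ B₂ B₃ W₁ W₂ W₃ : Type*}
    [AddCommGroup A₁] [Module ℝ A₁] [FiniteDimensional ℝ A₁]
    [AddCommGroup A₂] [Module ℝ A₂] [FiniteDimensional ℝ A₂]
    [AddCommGroup V₁] [Module ℝ V₁] [FiniteDimensional ℝ V₁]
    [AddCommGroup V₂] [Module ℝ V₂] [FiniteDimensional ℝ V₂]
    [AddCommGroup B₁] [Module ℝ B₁] [FiniteDimensional ℝ B₁]
    [AddCommGroup B₂] [Module ℝ B₂] [FiniteDimensional ℝ B₂]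
    [AddCommGroup B₃] [Module ℝ B₃] [FiniteDimensional ℝ B₃]
    [AddCommGroup W₁] [Module ℝ W₁] [FiniteDimensional ℝ W₁]
    [AddCommGroup W₂] [Module ℝ W₂] [FiniteDimensional ℝ W₂]
    [AddCommGroup W₃] [Module ℝ W₃] [FiniteDimensional ℝ W₃]
    (ρ₁ : B₁ →ₗ[ℝ] W₁) (σ₁ : B₁ →ₗ[ℝ] Module.Dual ℝ W₁)
    (ρ₂ : B₂ →ₗ[ℝ] W₂) (σ₂ : B₂ →ₗ[ℝ] Module.Dual ℝ W₂)
    (ρ₃ : B₃ →ₗ[ℝ] W₃) (σ₃ : B₃ →ₗ[ℝ] Module.Dual ℝ W₃)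
    (hH1₁ : ∀ b b' : B₁, σ₁ b (ρ₁ b') + σ₁ b' (ρ₁ b) = 0)
    (hH1₂ : ∀ b b' : B₂, σ₂ b (ρ₂ b') + σ₂ b' (ρ₂ b) = 0)
    (hH1₃ : ∀ b b' : B₃, σ₃ b (ρ₃ b') + σ₃ b' (ρ₃ b) = 0)
    (hH2₁ : ∀ b : B₁, ρ₁ b = 0 → σ₁ b = 0 → b = 0)
    (hH2₂ : ∀ b : B₂, ρ₂ b = 0 → σ₂ b = 0 → b = 0)
    (hH2₃ : ∀ b : B₃, ρ₃ b = 0 → σ₃ b = 0 → b = 0)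
    (hH3₁ : ∀ (w : W₁) (ξ : Module.Dual ℝ W₁),
      (∀ b : B₁, σ₁ b w + ξ (ρ₁ b) = 0) → ∃ b : B₁, ρ₁ b = w ∧ σ₁ b = ξ)
    (hH3₂ : ∀ (w : W₂) (ξ : Module.Dual ℝ W₂),
      (∀ b : B₂, σ₂ b w + ξ (ρ₂ b) = 0) → ∃ b : B₂, ρ₂ b = w ∧ σ₂ b = ξ)
    (hH3₃ : ∀ (w : W₃) (ξ : Module.Dual ℝ W₃),
      (∀ b : B₃, σ₃ b w + ξ (ρ₃ b) = 0) → ∃ b : B₃, ρ₃ b = w ∧ σ₃ b = ξ)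
    (ρA1 : A₁ →ₗ[ℝ] V₁) (ρA2 : A₂ →ₗ[ℝ] V₂)
    (c₁₁ : V₁ →ₗ[ℝ] W₁) (c₁₂ : V₁ →ₗ[ℝ] W₂)
    (c₂₂ : V₂ →ₗ[ℝ] W₂) (c₂₃ : V₂ →ₗ[ℝ] W₃)
    (d₁₁ : A₁ →ₗ[ℝ] B₁) (d₁₂ : A₁ →ₗ[ℝ] B₂)
    (d₂₂ : A₂ →ₗ[ℝ] B₂) (d₂₃ : A₂ →ₗ[ℝ] B₃)
    (hc₁₁ : c₁₁ ∘ₗ ρA1 = ρ₁ ∘ₗ d₁₁) (hc₁₂ : c₁₂ ∘ₗ ρA1 = ρ₂ ∘ₗ d₁₂)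
    (hc₂₂ : c₂₂ ∘ₗ ρA2 = ρ₂ ∘ₗ d₂₂) (hc₂₃ : c₂₃ ∘ₗ ρA2 = ρ₃ ∘ₗ d₂₃)
    (htrans : ∀ b : B₂, ∃ (a₁ : A₁) (a₂ : A₂), d₁₂ a₁ + d₂₂ a₂ = b)
    (L₁ : Submodule ℝ (V₁ × Module.Dual ℝ V₁)) (hL₁ : IsLagrangian L₁)
    (L₂ : Submodule ℝ (V₂ × Module.Dual ℝ V₂)) (hL₂ : IsLagrangian L₂)
    (hM1 : ∀ a : A₁, (ρA1 a, σ₁ (d₁₁ a) ∘ₗ c₁₁ - σ₂ (d₁₂ a) ∘ₗ c₁₂) ∈ L₁)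
    (hM2 : ∀ a : A₂, (ρA2 a, σ₂ (d₂₂ a) ∘ₗ c₂₂ - σ₃ (d₂₃ a) ∘ₗ c₂₃) ∈ L₂)
    (hN1 : ∀ (v : V₁) (α : Module.Dual ℝ V₁) (b₁ : B₁) (b₂ : B₂),
      (v, α) ∈ L₁ → c₁₁ v = ρ₁ b₁ → c₁₂ v = ρ₂ b₂ →
      α = σ₁ b₁ ∘ₗ c₁₁ - σ₂ b₂ ∘ₗ c₁₂ →
      ∃ a : A₁, ρA1 a = v ∧ d₁₁ a = b₁ ∧ d₁₂ a = b₂)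
    (hN2 : ∀ (v : V₂) (α : Module.Dual ℝ V₂) (b₂ : B₂) (b₃ : B₃),
      (v, α) ∈ L₂ → c₂₂ v = ρ₂ b₂ → c₂₃ v = ρ₃ b₃ →
      α = σ₂ b₂ ∘ₗ c₂₂ - σ₃ b₃ ∘ₗ c₂₃ →
      ∃ a : A₂, ρA2 a = v ∧ d₂₂ a = b₂ ∧ d₂₃ a = b₃)
    (hR : ∀ w : W₂,
      ∃ (v₁ : V₁) (α₁ : Module.Dual ℝ V₁) (v₂ : V₂) (α₂ : Module.Dual ℝ V₂),
        (v₁, α₁) ∈ L₁ ∧ (v₂, α₂) ∈ L₂ ∧ w = c₁₂ v₁ + c₂₂ v₂)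
    (hK1 : ∀ a : A₁, ρA1 a = 0 → d₁₁ a = 0 → d₁₂ a = 0 → a = 0)
    (hK2 : ∀ a : A₂, ρA2 a = 0 → d₂₂ a = 0 → d₂₃ a = 0 → a = 0) :
    ∀ (a₁ : A₁) (a₂ : A₂), d₁₂ a₁ = d₂₂ a₂ → ρA1 a₁ = 0 → ρA2 a₂ = 0 →
      d₁₁ a₁ = 0 → d₂₃ a₂ = 0 → a₁ = 0 ∧ a₂ = 0 := by
  intro a₁ a₂ hd hr1 hr2 h11 h23
  -- the common element b ∈ B₂
  set b : B₂ := d₁₂ a₁ with hb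
  have hρb : ρ₂ b = 0 := by
    have h := LinearMap.congr_fun hc₁₂ a₁
    simp only [LinearMap.comp_apply] at h
    rw [← hb] at h
    rw [← h, hr1, map_zero]
  -- membership of the degenerate elements in L₁ and L₂
  have m1 : ((0 : V₁), -(σ₂ b ∘ₗ c₁₂)) ∈ L₁ := by
    have := hM1 a₁
    rw [hr1, h11, map_zero] at this
    simpa using this
  have m2 : ((0 : V₂), (σ₂ b ∘ₗ c₂₂)) ∈ L₂ := by
    have := hM2 a₂
    rw [hr2, h23, map_zero, ← hd] at this
    simpa using this
  have hσb : σ₂ b = 0 := by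
    ext w
    obtain ⟨v₁, α₁, v₂, α₂, hv1, hv2, hw⟩ := hR w
    have e1 := (hL₁ _).mp m1 (v₁, α₁) hv1
    have e2 := (hL₂ _).mp m2 (v₂, α₂) hv2
    simp only [LinearMap.neg_apply, LinearMap.comp_apply, map_zero] at e1 e2
    have : σ₂ b (c₁₂ v₁) = 0 := by linarith
    have h2 : σ₂ b (c₂₂ v₂) = 0 := by linarith
    rw [hw]
    simp [map_add, this, h2]
  have hbz : b = 0 := hH2₂ b hρb hσb
  constructor
  · exact hK1 a₁ hr1 h11 hbz
  · exact hK2 a₂ hr2 (hd ▸ hbz) h23
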